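/- Let 𝒜 be a central hyperplane arrangement of rank 3. Then the number of faces of codimension 1 equals Σ_{k ≥ 2} k · n_k, where n_k is the number of faces F with codim F = 2 and #𝒜_F = k; that is, #{faces G | codim G = 1} = Σ_{k=2}^{N} k · #{faces F | codim F = 2 and #𝒜_F = k}. -/
import Mathlib


open Matrix

noncomputable section

variable {E : Type*} [AddCommGroup E] [Module ℝ E]

/-- A sign vector `σ : ι → SignType` is a chamber of the arrangement `α` if it takes
values in `{+1, -1}` and is realizable by some point. -/
def IsChamber {ι : Type*} (α : ι → (E →ₗ[ℝ] ℝ)) (σ : ι → SignType) : Prop :=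
  (∀ i, σ i ≠ 0) ∧ ∃ x : E, ∀ i, (σ i : ℝ) * α i x > 0

/-- The type of chambers of the arrangement `α`. -/
def Chamber {ι : Type*} (α : ι → (E →ₗ[ℝ] ℝ)) : Type _ :=
  {σ : ι → SignType // IsChamber α σ}

noncomputable instance chamberFintype {ι : Type*} [Fintype ι] (α : ι → (E →ₗ[ℝ] ℝ)) :
    Fintype (Chamber α) :=
  have : Finite (Chamber α) := Subtype.finite
  Fintype.ofFinite _

noncomputable instance chamberDecEq {ι : Type*} (α : ι → (E →ₗ[ℝ] ℝ)) :
    DecidableEq (Chamber α) := Classical.decEq _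

/-- Hamming distance between two sign vectors. -/
def cdist {ι : Type*} [Fintype ι] (σ τ : ι → SignType) : ℕ :=
  (Finset.univ.filter fun i => σ i ≠ τ i).card

/-- The `q`-Varchenko matrix of the arrangement, over `ℚ(q)`. -/
def varchenko {ι : Type*} [Fintype ι] (α : ι → (E →ₗ[ℝ] ℝ)) :
    Matrix (Chamber α) (Chamber α) (RatFunc ℚ) :=
  Matrix.of fun σ τ => (RatFunc.X : RatFunc ℚ) ^ cdist σ.1 τ.1

/-- The magnitude of the arrangement: the sum of all entries of the inverse of the
Varchenko matrix. -/
def Mag {ι : Type*} [Fintype ι] (α : ι → (E →ₗ[ℝ] ℝ)) : RatFunc ℚ :=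
  ∑ σ : Chamber α, ∑ τ : Chamber α, (varchenko α)⁻¹ σ τ

/-- A sign vector `F : ι → SignType` is a face of the arrangement `α` if it is realizable. -/
def IsFace {ι : Type*} (α : ι → (E →ₗ[ℝ] ℝ)) (F : ι → SignType) : Prop :=
  ∃ x : E, ∀ i, SignType.sign (α i x) = F i

/-- The type of faces of the arrangement `α`. -/
def Face {ι : Type*} (α : ι → (E →ₗ[ℝ] ℝ)) : Type _ :=
  {F : ι → SignType // IsFace α F}

noncomputable instance faceFintype {ι : Type*} [Fintype ι] (α : ι → (E →ₗ[ℝ] ℝ)) :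
    Fintype (Face α) :=
  have : Finite (Face α) := Subtype.finite
  Fintype.ofFinite _

/-- The set of hyperplanes containing the face `F`. -/
def zeroSet {ι : Type*} [Fintype ι] (F : ι → SignType) : Finset ι :=
  Finset.univ.filter fun i => F i = 0

/-- The codimension of a face: the codimension of the intersection of the hyperplanes
containing it. -/
def codim {ι : Type*} (α : ι → (E →ₗ[ℝ] ℝ)) (F : ι → SignType) : ℕ :=
  Module.finrank ℝ E -
    Module.finrank ℝ (⨅ i ∈ {i | F i = 0}, LinearMap.ker (α i) : Submodule ℝ E)

/-- The rank of the arrangement. -/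
def arrRank {ι : Type*} (α : ι → (E →ₗ[ℝ] ℝ)) : ℕ :=
  Module.finrank ℝ E - Module.finrank ℝ (⨅ i, LinearMap.ker (α i) : Submodule ℝ E)




noncomputable section
namespace PlaneAux

/-- Evaluation of the linear form with coefficients `a` at the point `p`. -/
def ev (a p : ℝ × ℝ) : ℝ := a.1 * p.1 + a.2 * p.2

/-- Rotation by 90 degrees. -/
def J (p : ℝ × ℝ) : ℝ × ℝ := (-p.2, p.1)

lemma ev_smul (a : ℝ × ℝ) (t : ℝ) (p : ℝ × ℝ) : ev a (t • p) = t * ev a p := by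
  simp [ev, Prod.smul_def, smul_eq_mul]; ring

lemma sign_pos_mul {t : ℝ} (ht : 0 < t) (x : ℝ) : SignType.sign (t * x) = SignType.sign x := by
  rw [sign_mul, sign_pos ht, one_mul]

lemma sign_add_of_abs_lt {x y : ℝ} (h : |y| < |x|) : SignType.sign (x + y) = SignType.sign x := by
  have hy := abs_lt.1 h
  rcases lt_trichotomy x 0 with hx | hx | hx
  · rw [sign_neg hx, sign_neg]
    rw [abs_of_neg hx] at hy
    linarith [hy.2]
  · subst hx; simp at h; linarith [abs_nonneg y]
  · rw [sign_pos hx, sign_pos]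
    rw [abs_of_pos hx] at hy
    linarith [hy.1]

lemma det_eq_zero {a p q : ℝ × ℝ} (ha : a ≠ 0) (h1 : ev a p = 0) (h2 : ev a q = 0) :
    p.1 * q.2 - p.2 * q.1 = 0 := by
  have h1' : a.1 * p.1 + a.2 * p.2 = 0 := h1
  have h2' : a.1 * q.1 + a.2 * q.2 = 0 := h2
  have ha1 : a.1 * (p.1 * q.2 - p.2 * q.1) = 0 := by linear_combination q.2 * h1' - p.2 * h2'
  have ha2 : a.2 * (p.1 * q.2 - p.2 * q.1) = 0 := by linear_combination - q.1 * h1' + p.1 * h2'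
  rcases mul_eq_zero.1 ha1 with h | h
  · rcases mul_eq_zero.1 ha2 with h' | h'
    · exact absurd (Prod.ext h h') ha
    · exact h'
  · exact h

lemma colinear_of_det {p q : ℝ × ℝ} (hp : p ≠ 0) (hd : p.1 * q.2 - p.2 * q.1 = 0) :
    ∃ t : ℝ, q = t • p := by
  by_cases h1 : p.1 ≠ 0
  · refine ⟨q.1 / p.1, ?_⟩
    have h2 : q.2 = q.1 / p.1 * p.2 := by field_simp; linarith [hd]
    refine Prod.ext ?_ ?_ <;> simp [Prod.smul_def, smul_eq_mul]
    · field_simp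
    · rw [h2]
  · push_neg at h1
    have h2 : p.2 ≠ 0 := fun h2 => hp (Prod.ext h1 h2)
    have hq1 : q.1 = 0 := by
      have hz : p.2 * q.1 = 0 := by rw [h1] at hd; linarith
      rcases mul_eq_zero.1 hz with h | h
      · exact absurd h h2
      · exact h
    refine ⟨q.2 / p.2, Prod.ext ?_ ?_⟩ <;> simp [Prod.smul_def, smul_eq_mul]
    · rw [hq1, h1]; ring
    · field_simp

lemma ev_J_ne {a p : ℝ × ℝ} (ha : a ≠ 0) (hp : p ≠ 0) (h : ev a p = 0) : ev a (J p) ≠ 0 := by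
  intro h'
  have h1 : a.1 * p.1 + a.2 * p.2 = 0 := h
  have h2 : a.1 * -p.2 + a.2 * p.1 = 0 := h'
  have hn : (0:ℝ) < p.1 ^ 2 + p.2 ^ 2 := by
    have : p.1 ≠ 0 ∨ p.2 ≠ 0 := by
      by_contra hc; push_neg at hc; exact hp (Prod.ext hc.1 hc.2)
    rcases this with h | h <;> positivity
  have ha1 : a.1 * (p.1 ^ 2 + p.2 ^ 2) = 0 := by linear_combination p.1 * h1 - p.2 * h2
  have ha2 : a.2 * (p.1 ^ 2 + p.2 ^ 2) = 0 := by linear_combination p.2 * h1 + p.1 * h2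
  exact ha (Prod.ext (by rcases mul_eq_zero.1 ha1 with h|h; exact h; linarith)
    (by rcases mul_eq_zero.1 ha2 with h|h; exact h; linarith))

lemma quad_unique {a b s s' : ℝ} (ha : a ≠ 0) (hs : 0 < s) (hs' : 0 < s')
    (h : a * s ^ 2 + 2 * b * s - a = 0) (h' : a * s' ^ 2 + 2 * b * s' - a = 0) : s = s' := by
  by_contra hne
  have hfac : (s - s') * (a * (s + s') + 2 * b) = 0 := by linear_combination h - h'
  have h2 : a * (s + s') + 2 * b = 0 := by
    rcases mul_eq_zero.1 hfac with h | h
    · exact absurd (by linarith) hne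
    · exact h
  have h3 : a * (1 + s * s') = 0 := by linear_combination - h + s * h2
  rcases mul_eq_zero.1 h3 with h | h
  · exact ha h
  · nlinarith

lemma quad_root {a b : ℝ} (ha : a ≠ 0) : ∃ s : ℝ, 0 < s ∧ a * s ^ 2 + 2 * b * s - a = 0 := by
  set r := Real.sqrt (a ^ 2 + b ^ 2) with hrdef
  have hr2 : r ^ 2 = a ^ 2 + b ^ 2 := Real.sq_sqrt (by positivity)
  have ha2 : 0 < a ^ 2 := by positivity
  have hrb : |b| < r := by
    rw [hrdef, ← Real.sqrt_sq_eq_abs]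
    exact Real.sqrt_lt_sqrt (by positivity) (by linarith)
  have hy := abs_lt.1 hrb
  have hbr : 0 < b + r := by linarith
  rcases lt_trichotomy a 0 with hlt | heq | hgt
  · have hna : (0:ℝ) < -a := by linarith
    refine ⟨(b + r) / (-a), div_pos hbr hna, ?_⟩
    have heq2 : a * ((b + r) / (-a)) ^ 2 + 2 * b * ((b + r) / (-a)) - a
        = ((a ^ 2 + b ^ 2) - r ^ 2) / (-a) := by
      field_simp
      ring
    rw [heq2, hr2, sub_self, zero_div]
  · exact absurd heq ha
  · refine ⟨a / (b + r), div_pos hgt hbr, ?_⟩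
    have heq2 : a * (a / (b + r)) ^ 2 + 2 * b * (a / (b + r)) - a
        = a * ((a ^ 2 + b ^ 2) - r ^ 2) / (b + r) ^ 2 := by
      field_simp
      ring
    rw [heq2, hr2, sub_self, mul_zero, zero_div]

end PlaneAux

noncomputable section
namespace PlaneAux

variable {ι : Type*} [Fintype ι]

lemma ev_zero_right (a : ℝ × ℝ) : ev a 0 = 0 := by simp [ev]

lemma ev_zero_left (p : ℝ × ℝ) : ev 0 p = 0 := by simp [ev]

lemma J_smul (t : ℝ) (p : ℝ × ℝ) : J (t • p) = t • J p := by
  simp [J, Prod.smul_def, smul_eq_mul]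

lemma exists_perturb [Nonempty ι] (c : ι → ℝ × ℝ) (p : ℝ × ℝ) :
    ∃ q : ℝ × ℝ, ∀ j, SignType.sign (ev (c j) q) =
      if ev (c j) p = 0 then SignType.sign (ev (c j) (J p)) else SignType.sign (ev (c j) p) := by
  classical
  set δ : ι → ℝ := fun j =>
    if ev (c j) p = 0 then 1 else |ev (c j) p| / (|ev (c j) (J p)| + 1) with hδ
  have hδpos : ∀ j, 0 < δ j := by
    intro j
    rw [hδ]
    dsimp only
    split_ifs with h
    · norm_num
    · have : 0 < |ev (c j) p| := abs_pos.2 h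
      positivity
  set ε : ℝ := Finset.univ.inf' Finset.univ_nonempty δ with hε
  have hεpos : 0 < ε := by
    rw [hε, Finset.lt_inf'_iff]
    exact fun j _ => hδpos j
  refine ⟨p + ε • J p, fun j => ?_⟩
  have hev : ev (c j) (p + ε • J p) = ev (c j) p + ε * ev (c j) (J p) := by
    simp [ev, J, Prod.smul_def, smul_eq_mul]; ring
  rw [hev]
  by_cases h : ev (c j) p = 0
  · rw [if_pos h, h, zero_add, sign_pos_mul hεpos]
  · rw [if_neg h]
    apply sign_add_of_abs_lt
    have hle : ε ≤ δ j := Finset.inf'_le δ (Finset.mem_univ j)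
    rw [hδ] at hle
    simp only [if_neg h] at hle
    have h1 : 0 < |ev (c j) p| := abs_pos.2 h
    have h2 : (0:ℝ) ≤ |ev (c j) (J p)| := abs_nonneg _
    have : |ε * ev (c j) (J p)| = ε * |ev (c j) (J p)| := by
      rw [abs_mul, abs_of_pos hεpos]
    rw [this]
    calc ε * |ev (c j) (J p)| ≤ |ev (c j) p| / (|ev (c j) (J p)| + 1) * |ev (c j) (J p)| := by
          apply mul_le_mul_of_nonneg_right hle h2
      _ < |ev (c j) p| := by
          rw [div_mul_eq_mul_div, div_lt_iff₀ (by linarith)]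
          nlinarith

lemma signType_neg_ne {s : SignType} (h : s ≠ 0) : -s ≠ s := by
  cases s <;> simp_all <;> decide

lemma sign_cancel {s t : SignType} (h : s * t = t) (ht : t ≠ 0) : s = 1 := by
  cases s <;> cases t <;> simp_all <;> rfl

lemma realizer_pos_smul {c : ι → ℝ × ℝ}
    (hcap : ∀ p : ℝ × ℝ, (∀ j, ev (c j) p = 0) → p = 0)
    {σ : ι → SignType} {p p' : ℝ × ℝ} (hp0 : p ≠ 0) (hp'0 : p' ≠ 0)
    (hp : ∀ j, SignType.sign (ev (c j) p) = σ j)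
    (hp' : ∀ j, SignType.sign (ev (c j) p') = σ j)
    {j0 : ι} (hc0 : c j0 ≠ 0) (h0 : σ j0 = 0) : ∃ t : ℝ, 0 < t ∧ p' = t • p := by
  have he1 : ev (c j0) p = 0 := sign_eq_zero_iff.1 (by rw [hp j0, h0])
  have he2 : ev (c j0) p' = 0 := sign_eq_zero_iff.1 (by rw [hp' j0, h0])
  obtain ⟨t, ht⟩ := colinear_of_det hp0 (det_eq_zero hc0 he1 he2)
  obtain ⟨k, hk⟩ : ∃ k, ev (c k) p ≠ 0 := by
    by_contra hcon; push_neg at hcon; exact hp0 (hcap p hcon)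
  have hσk : σ k ≠ 0 := by rw [← hp k]; exact fun h => hk (sign_eq_zero_iff.1 h)
  have hev' : ev (c k) p' = t * ev (c k) p := by rw [ht, ev_smul]
  rcases lt_trichotomy t 0 with hlt | heq | hgt
  · exfalso
    have hh := hp' k
    rw [hev', sign_mul, hp k, sign_neg hlt, neg_one_mul] at hh
    exact signType_neg_ne hσk hh
  · exfalso
    rw [heq, zero_smul] at ht
    exact hp'0 ht
  · exact ⟨t, hgt, ht⟩

/-- Sign vector of the chamber obtained by perturbing the ray `p` counterclockwise. -/
def phiFun (c : ι → ℝ × ℝ) (σ : ι → SignType) (p : ℝ × ℝ) : ι → SignType :=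
  fun j => if σ j = 0 then SignType.sign (ev (c j) (J p)) else σ j

lemma phiFun_smul (c : ι → ℝ × ℝ) (σ : ι → SignType) {t : ℝ} (ht : 0 < t) (p : ℝ × ℝ) :
    phiFun c σ (t • p) = phiFun c σ p := by
  funext j
  unfold phiFun
  split_ifs with h
  · rw [J_smul, ev_smul, sign_pos_mul ht]
  · rfl

lemma phiFun_indep {c : ι → ℝ × ℝ}
    (hcap : ∀ p : ℝ × ℝ, (∀ j, ev (c j) p = 0) → p = 0)
    {σ : ι → SignType} {p p' : ℝ × ℝ} (hp0 : p ≠ 0) (hp'0 : p' ≠ 0)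
    (hp : ∀ j, SignType.sign (ev (c j) p) = σ j)
    (hp' : ∀ j, SignType.sign (ev (c j) p') = σ j)
    {j0 : ι} (hc0 : c j0 ≠ 0) (h0 : σ j0 = 0) :
    phiFun c σ p' = phiFun c σ p := by
  obtain ⟨t, ht, rfl⟩ := realizer_pos_smul hcap hp0 hp'0 hp hp' hc0 h0
  exact phiFun_smul c σ ht p

lemma phiFun_mem {c : ι → ℝ × ℝ} {i : ι} (hci : c i = 0) (hc : ∀ j, j ≠ i → c j ≠ 0)
    {σ : ι → SignType} {p : ℝ × ℝ} (hp0 : p ≠ 0)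
    (hp : ∀ j, SignType.sign (ev (c j) p) = σ j) :
    (∃ q, ∀ j, SignType.sign (ev (c j) q) = phiFun c σ p j) ∧
      ∀ j, j ≠ i → phiFun c σ p j ≠ 0 := by
  have : Nonempty ι := ⟨i⟩
  have hzero : ∀ j, σ j = 0 ↔ ev (c j) p = 0 := by
    intro j
    rw [← hp j]
    exact sign_eq_zero_iff
  constructor
  · obtain ⟨q, hq⟩ := exists_perturb c p
    refine ⟨q, fun j => ?_⟩
    rw [hq j]
    unfold phiFun
    by_cases h : σ j = 0
    · rw [if_pos h, if_pos ((hzero j).1 h)]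
    · rw [if_neg h, if_neg (fun he => h ((hzero j).2 he)), hp j]
  · intro j hj
    unfold phiFun
    split_ifs with h
    · intro hcon
      exact ev_J_ne (hc j hj) hp0 ((hzero j).1 h) (sign_eq_zero_iff.1 hcon)
    · exact h

/-- The bijection from codimension-2 sign vectors (rays) to codimension-1
sign vectors (chambers) of a planar arrangement. -/
noncomputable def Phi (c : ι → ℝ × ℝ) (i : ι) (hci : c i = 0) (hc : ∀ j, j ≠ i → c j ≠ 0) :
    {σ : ι → SignType // ∃ p : ℝ × ℝ, p ≠ 0 ∧ (∀ j, SignType.sign (ev (c j) p) = σ j) ∧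
        ∃ j, j ≠ i ∧ σ j = 0} →
    {σ : ι → SignType // (∃ p : ℝ × ℝ, ∀ j, SignType.sign (ev (c j) p) = σ j) ∧
        ∀ j, j ≠ i → σ j ≠ 0} :=
  fun B => ⟨phiFun c B.1 (Classical.choose B.2),
    phiFun_mem hci hc (Classical.choose_spec B.2).1 (Classical.choose_spec B.2).2.1⟩

lemma Phi_eq {c : ι → ℝ × ℝ} {i : ι} (hci : c i = 0) (hc : ∀ j, j ≠ i → c j ≠ 0)
    (hcap : ∀ p : ℝ × ℝ, (∀ j, ev (c j) p = 0) → p = 0)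
    (B : {σ : ι → SignType // ∃ p : ℝ × ℝ, p ≠ 0 ∧ (∀ j, SignType.sign (ev (c j) p) = σ j) ∧
        ∃ j, j ≠ i ∧ σ j = 0})
    {p : ℝ × ℝ} (hp0 : p ≠ 0) (hp : ∀ j, SignType.sign (ev (c j) p) = B.1 j) :
    (Phi c i hci hc B).1 = phiFun c B.1 p := by
  obtain ⟨j0, hj0, h0⟩ := (Classical.choose_spec B.2).2.2
  have hrfl : (Phi c i hci hc B).1 = phiFun c B.1 (Classical.choose B.2) := rfl
  rw [hrfl]
  exact (phiFun_indep hcap hp0 (Classical.choose_spec B.2).1 hp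
    (Classical.choose_spec B.2).2.1 (hc j0 hj0) h0)

lemma key_pos {c : ι → ℝ × ℝ} {σ σ' : ι → SignType} {p p' : ℝ × ℝ} (hp0 : p ≠ 0)
    (hp : ∀ j, SignType.sign (ev (c j) p) = σ j)
    (hp' : ∀ j, SignType.sign (ev (c j) p') = σ' j)
    {j0 : ι} (hcj0 : c j0 ≠ 0) (h0 : σ j0 = 0) (h0' : σ' j0 ≠ 0)
    (hΦ : SignType.sign (ev (c j0) (J p)) = σ' j0) :
    0 < p.1 * p'.2 - p.2 * p'.1 := by
  have hevp : ev (c j0) p = 0 := sign_eq_zero_iff.1 (by rw [hp j0, h0])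
  have hb : ev (c j0) (J p) ≠ 0 := ev_J_ne hcj0 hp0 hevp
  have hn : (0:ℝ) < p.1 ^ 2 + p.2 ^ 2 := by
    have : p.1 ≠ 0 ∨ p.2 ≠ 0 := by
      by_contra hcon; push_neg at hcon; exact hp0 (Prod.ext hcon.1 hcon.2)
    rcases this with h | h <;> positivity
  set D : ℝ := p.1 * p'.2 - p.2 * p'.1 with hD
  have hkey : (p.1 ^ 2 + p.2 ^ 2) * ev (c j0) p'
      = (p.1 * p'.1 + p.2 * p'.2) * ev (c j0) p + D * ev (c j0) (J p) := by
    simp only [ev, J, hD]; ring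
  rw [hevp, mul_zero, zero_add] at hkey
  have hdecomp : ev (c j0) p' = (D / (p.1 ^ 2 + p.2 ^ 2)) * ev (c j0) (J p) := by
    field_simp
    linarith [hkey]
  have hsgn : SignType.sign (D / (p.1 ^ 2 + p.2 ^ 2)) * SignType.sign (ev (c j0) (J p))
      = SignType.sign (ev (c j0) (J p)) := by
    rw [← sign_mul, ← hdecomp, hp' j0, ← hΦ]
  have h1 : SignType.sign (D / (p.1 ^ 2 + p.2 ^ 2)) = 1 :=
    sign_cancel hsgn (fun h => hb (sign_eq_zero_iff.1 h))
  have h2 : 0 < D / (p.1 ^ 2 + p.2 ^ 2) := sign_eq_one_iff.1 h1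
  have := mul_pos h2 hn
  rw [div_mul_cancel₀ _ hn.ne'] at this
  exact this

end PlaneAux

noncomputable section
namespace PlaneAux

variable {ι : Type*} [Fintype ι]

theorem plane_card (c : ι → ℝ × ℝ) (i : ι) (hci : c i = 0)
    (hc : ∀ j, j ≠ i → c j ≠ 0)
    (hcap : ∀ p : ℝ × ℝ, (∀ j, ev (c j) p = 0) → p = 0) :
    Nat.card {σ : ι → SignType // (∃ p : ℝ × ℝ, ∀ j, SignType.sign (ev (c j) p) = σ j) ∧
        ∀ j, j ≠ i → σ j ≠ 0}
    = Nat.card {σ : ι → SignType // ∃ p : ℝ × ℝ, p ≠ 0 ∧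
        (∀ j, SignType.sign (ev (c j) p) = σ j) ∧ ∃ j, j ≠ i ∧ σ j = 0} := by
  classical
  refine (Nat.card_eq_of_bijective (Phi c i hci hc) ⟨?_, ?_⟩).symm
  · -- injectivity
    intro B1 B2 heq
    obtain ⟨σ1, h1⟩ := B1
    obtain ⟨σ2, h2⟩ := B2
    have h1' := h1
    have h2' := h2
    obtain ⟨p, hp0, hp, j0, hj0i, h00⟩ := h1'
    obtain ⟨p', hp'0, hp', j1, hj1i, h11⟩ := h2'
    have hfun : phiFun c σ1 p = phiFun c σ2 p' := by
      have e1 := Phi_eq hci hc hcap ⟨σ1, h1⟩ hp0 hp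
      have e2 := Phi_eq hci hc hcap ⟨σ2, h2⟩ hp'0 hp'
      rw [← e1, ← e2, heq]
    by_cases hcom : ∃ j, j ≠ i ∧ σ1 j = 0 ∧ σ2 j = 0
    · obtain ⟨j2, hj2, ha1, ha2⟩ := hcom
      have he1 : ev (c j2) p = 0 := sign_eq_zero_iff.1 (by rw [hp j2, ha1])
      have he2 : ev (c j2) p' = 0 := sign_eq_zero_iff.1 (by rw [hp' j2, ha2])
      obtain ⟨t, ht⟩ := colinear_of_det hp0 (det_eq_zero (hc j2 hj2) he1 he2)
      obtain ⟨k, hk⟩ : ∃ k, ev (c k) p ≠ 0 := by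
        by_contra hcon; push_neg at hcon; exact hp0 (hcap p hcon)
      have hσ1k : σ1 k ≠ 0 := by
        rw [← hp k]; exact fun h => hk (sign_eq_zero_iff.1 h)
      have hev' : ev (c k) p' = t * ev (c k) p := by rw [ht, ev_smul]
      rcases lt_trichotomy t 0 with hlt | hzero | hgt
      · exfalso
        have hσ2k : σ2 k = -σ1 k := by
          rw [← hp' k, hev', sign_mul, sign_neg hlt, neg_one_mul, hp k]
        have hf := congrFun hfun k
        unfold phiFun at hf
        rw [if_neg hσ1k, if_neg (by
          rw [hσ2k]
          intro h
          apply hσ1k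
          cases hcase : σ1 k <;> rw [hcase] at h <;> first | rfl | simp at h)] at hf
        rw [hσ2k] at hf
        exact signType_neg_ne hσ1k hf.symm
      · exfalso; rw [hzero, zero_smul] at ht; exact hp'0 ht
      · refine Subtype.ext (funext fun j => ?_)
        show σ1 j = σ2 j
        rw [← hp j, ← hp' j, ht, ev_smul, sign_pos_mul hgt]
    · push_neg at hcom
      have h2j0 : σ2 j0 ≠ 0 := hcom j0 hj0i h00
      have h1j1 : σ1 j1 ≠ 0 := fun h => (hcom j1 hj1i h) h11
      have hΦ0 : SignType.sign (ev (c j0) (J p)) = σ2 j0 := by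
        have hf := congrFun hfun j0
        unfold phiFun at hf
        rwa [if_pos h00, if_neg h2j0] at hf
      have hΦ1 : SignType.sign (ev (c j1) (J p')) = σ1 j1 := by
        have hf := congrFun hfun j1
        unfold phiFun at hf
        rw [if_neg h1j1, if_pos h11] at hf
        exact hf.symm
      have hd1 := key_pos hp0 hp hp' (hc j0 hj0i) h00 h2j0 hΦ0
      have hd2 := key_pos hp'0 hp' hp (hc j1 hj1i) h11 h1j1 hΦ1
      exfalso; linarith
  · -- surjectivity
    intro A
    obtain ⟨τ, hA⟩ := A
    have hA' := hA
    obtain ⟨⟨q, hq⟩, hτ⟩ := hA'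
    have hex : ∃ j, j ≠ i := by
      by_contra h; push_neg at h
      have h10 : ((1, 0) : ℝ × ℝ) = 0 := hcap _ (fun j => by rw [h j, hci, ev_zero_left])
      simp [Prod.ext_iff] at h10
    obtain ⟨j0, hj0⟩ := hex
    have haj : ∀ j, j ≠ i → ev (c j) q ≠ 0 := fun j hj he =>
      hτ j hj (by rw [← hq j, he, sign_zero])
    have hq0 : q ≠ 0 := fun h => haj j0 hj0 (by rw [h, ev_zero_right])
    set sfun : ι → ℝ := fun j =>
      if h : j ≠ i then Classical.choose (quad_root (b := ev (c j) (J q)) (haj j h)) else 1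
      with hsfun
    have hspec : ∀ j, (h : j ≠ i) → 0 < sfun j ∧
        (ev (c j) q) * (sfun j)^2 + 2 * (ev (c j) (J q)) * (sfun j) - ev (c j) q = 0 := by
      intro j h
      rw [hsfun]; dsimp only; rw [dif_pos h]
      exact Classical.choose_spec (quad_root (haj j h))
    set T : Finset ι := Finset.univ.filter (· ≠ i) with hT
    have hTne : T.Nonempty := ⟨j0, by simp [hT, hj0]⟩
    set s : ℝ := T.inf' hTne sfun with hs
    obtain ⟨jm, hjmT, hjm⟩ := Finset.exists_mem_eq_inf' hTne sfun
    rw [← hs] at hjm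
    have hjmne : jm ≠ i := by simpa [hT] using hjmT
    have hspos : 0 < s := by rw [hjm]; exact (hspec jm hjmne).1
    have hsle : ∀ j, j ≠ i → s ≤ sfun j := fun j hj =>
      Finset.inf'_le sfun (by simp [hT, hj])
    set x : ℝ × ℝ := ((1 - s^2) * q.1 + 2*s*q.2, (1 - s^2) * q.2 - 2*s*q.1) with hx
    have hevx : ∀ a : ℝ × ℝ, ev a x = (1 - s^2) * ev a q - 2*s* ev a (J q) := by
      intro a; rw [hx]; simp only [ev, J]; ring
    have hevJx : ∀ a : ℝ × ℝ, ev a (J x) = (1 - s^2) * ev a (J q) + 2*s* ev a q := by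
      intro a; rw [hx]; simp only [ev, J]; ring
    have hx0 : x ≠ 0 := by
      intro h
      have h1 : (1 - s^2) * q.1 + 2*s*q.2 = 0 := by
        have := congrArg Prod.fst h; rwa [hx] at this
      have h2 : (1 - s^2) * q.2 - 2*s*q.1 = 0 := by
        have := congrArg Prod.snd h; rwa [hx] at this
      have hq1 : (1 + s^2)^2 * q.1 = 0 := by linear_combination (1 - s^2) * h1 - 2*s*h2
      have hq2 : (1 + s^2)^2 * q.2 = 0 := by linear_combination 2*s*h1 + (1 - s^2)*h2
      have hpos : (0:ℝ) < (1 + s^2)^2 := by positivity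
      have hq1' : q.1 = 0 := by
        rcases mul_eq_zero.1 hq1 with h' | h'
        · exact absurd h' hpos.ne'
        · exact h'
      have hq2' : q.2 = 0 := by
        rcases mul_eq_zero.1 hq2 with h' | h'
        · exact absurd h' hpos.ne'
        · exact h'
      exact hq0 (Prod.ext_iff.2 ⟨by simpa using hq1', by simpa using hq2'⟩)
    set σ : ι → SignType := fun j => SignType.sign (ev (c j) x) with hσdef
    have hσjm : σ jm = 0 := by
      have hrfl : σ jm = SignType.sign (ev (c jm) x) := rfl
      rw [hrfl, sign_eq_zero_iff, hevx]
      have hsp := (hspec jm hjmne).2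
      rw [← hjm] at hsp
      linarith
    have hBmem : ∃ p : ℝ × ℝ, p ≠ 0 ∧ (∀ j, SignType.sign (ev (c j) p) = σ j) ∧
        ∃ j, j ≠ i ∧ σ j = 0 := ⟨x, hx0, fun j => rfl, jm, hjmne, hσjm⟩
    refine ⟨⟨σ, hBmem⟩, Subtype.ext ?_⟩
    rw [Phi_eq hci hc hcap ⟨σ, hBmem⟩ hx0 (fun j => rfl)]
    funext j
    show phiFun c σ x j = τ j
    unfold phiFun
    by_cases hji : j = i
    · subst hji
      have hσi : σ j = 0 := by
        have hrfl : σ j = SignType.sign (ev (c j) x) := rfl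
        rw [hrfl, hci, ev_zero_left, sign_zero]
      rw [if_pos hσi, hci, ev_zero_left, sign_zero]
      rw [← hq j, hci, ev_zero_left, sign_zero]
    · have ha : ev (c j) q ≠ 0 := haj j hji
      by_cases h0 : σ j = 0
      · rw [if_pos h0]
        have hg : (1 - s^2) * ev (c j) q - 2*s*(ev (c j) (J q)) = 0 := by
          have hrfl : σ j = SignType.sign (ev (c j) x) := rfl
          rw [hrfl, sign_eq_zero_iff, hevx] at h0
          exact h0
        have hkey : 2*s*(ev (c j) (J x)) = ev (c j) q * (1 + s^2)^2 := by
          rw [hevJx]; linear_combination (-(1 - s^2)) * hg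
        calc SignType.sign (ev (c j) (J x))
            = SignType.sign (2*s*(ev (c j) (J x))) := (sign_pos_mul (by linarith) _).symm
          _ = SignType.sign ((1 + s^2)^2 * ev (c j) q) := by rw [hkey, mul_comm]
          _ = SignType.sign (ev (c j) q) := sign_pos_mul (by positivity) _
          _ = τ j := hq j
      · rw [if_neg h0]
        have hgne : ev (c j) x ≠ 0 := fun h => h0 (by
          have hrfl : σ j = SignType.sign (ev (c j) x) := rfl
          rw [hrfl, h, sign_zero])
        set G : ℝ → ℝ := fun t => (1 - t^2) * ev (c j) q - 2*t*(ev (c j) (J q)) with hG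
        have hGc : Continuous G := by
          rw [hG]
          exact ((continuous_const.sub (continuous_pow 2)).mul continuous_const).sub
            ((continuous_const.mul continuous_id).mul continuous_const)
        have hG0 : G 0 = ev (c j) q := by rw [hG]; norm_num
        have hGs : G s = ev (c j) x := (hevx (c j)).symm
        have hsg : SignType.sign (G s) = SignType.sign (ev (c j) q) := by
          by_contra hne
          have hGsne : G s ≠ 0 := hGs ▸ hgne
          have key : ∃ t ∈ Set.Icc (0:ℝ) s, G t = 0 := by
            rcases lt_trichotomy (ev (c j) q) 0 with hlt | he | hgt
            · rcases lt_trichotomy (G s) 0 with h' | h' | h'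
              · exact absurd (by rw [sign_neg h', sign_neg hlt]) hne
              · exact absurd h' hGsne
              · have := intermediate_value_Icc hspos.le hGc.continuousOn
                  (show (0:ℝ) ∈ Set.Icc (G 0) (G s) by
                    rw [hG0]; exact ⟨hlt.le, h'.le⟩)
                obtain ⟨t, ht, hGt⟩ := this
                exact ⟨t, ht, hGt⟩
            · exact absurd he ha
            · rcases lt_trichotomy (G s) 0 with h' | h' | h'
              · have := intermediate_value_Icc' hspos.le hGc.continuousOn
                  (show (0:ℝ) ∈ Set.Icc (G s) (G 0) by
                    rw [hG0]; exact ⟨h'.le, hgt.le⟩)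
                obtain ⟨t, ht, hGt⟩ := this
                exact ⟨t, ht, hGt⟩
              · exact absurd h' hGsne
              · exact absurd (by rw [sign_pos h', sign_pos hgt]) hne
          obtain ⟨t, ht, hGt⟩ := key
          have ht0 : 0 < t := by
            rcases eq_or_lt_of_le ht.1 with h | h
            · exfalso
              subst h
              exact ha (by rw [← hG0]; exact hGt)
            · exact h
          have hq2 : ev (c j) q * t^2 + 2*(ev (c j) (J q))*t - ev (c j) q = 0 := by
            have : G t = (1 - t^2) * ev (c j) q - 2*t*(ev (c j) (J q)) := rfl
            rw [this] at hGt
            linarith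
          have hspj := hspec j hji
          have hteq : t = sfun j := quad_unique ha ht0 hspj.1 hq2 (by linarith [hspj.2])
          have hts : t = s := le_antisymm ht.2 (by rw [hteq]; exact hsle j hji)
          exact hGsne (hts ▸ hGt)
        have hrfl : σ j = SignType.sign (ev (c j) x) := rfl
        rw [hrfl, ← hGs, hsg, hq j]
end PlaneAux

namespace ArrAux

open Submodule Module PlaneAux

variable {E : Type*} [AddCommGroup E] [Module ℝ E] [FiniteDimensional ℝ E]

lemma hyperplane_finrank (f : E →ₗ[ℝ] ℝ) (hf : f ≠ 0) :
    Module.finrank ℝ (LinearMap.ker f) + 1 = Module.finrank ℝ E := by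
  have hsurj : Function.Surjective f := by
    obtain ⟨x, hx⟩ : ∃ x, f x ≠ 0 := by
      by_contra h; push_neg at h; exact hf (LinearMap.ext fun x => by simp [h x])
    intro r
    exact ⟨(r / f x) • x, by rw [_root_.map_smul, smul_eq_mul]; field_simp⟩
  have hr : LinearMap.range f = ⊤ := LinearMap.range_eq_top.2 hsurj
  have hrn := LinearMap.finrank_range_add_finrank_ker f
  rw [hr, finrank_top, Module.finrank_self] at hrn
  omega

lemma ker_eq_of_ker_le {f g : E →ₗ[ℝ] ℝ} (hf : f ≠ 0) (hg : g ≠ 0)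
    (h : LinearMap.ker f ≤ LinearMap.ker g) : LinearMap.ker f = LinearMap.ker g := by
  apply Submodule.eq_of_le_of_finrank_le h
  have h1 := hyperplane_finrank f hf
  have h2 := hyperplane_finrank g hg
  omega

variable {ι : Type*} [Fintype ι]

lemma mem_zeroSet_iff (F : ι → SignType) (j : ι) : j ∈ zeroSet F ↔ F j = 0 := by
  simp [zeroSet]

lemma codim_of_zeroSet_empty (α : ι → (E →ₗ[ℝ] ℝ)) {F : ι → SignType}
    (h : zeroSet F = ∅) : codim α F = 0 := by
  have hset : {i | F i = 0} = (∅ : Set ι) := by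
    ext j
    simp only [Set.mem_setOf_eq, Set.mem_empty_iff_false, iff_false]
    intro hj
    have : j ∈ zeroSet F := (mem_zeroSet_iff F j).2 hj
    rw [h] at this
    exact absurd this (Finset.notMem_empty j)
  rw [codim, hset]
  have htop : (⨅ j ∈ (∅ : Set ι), LinearMap.ker (α j)) = (⊤ : Submodule ℝ E) := by simp
  rw [htop, finrank_top, Nat.sub_self]

lemma codim_of_zeroSet_singleton (α : ι → (E →ₗ[ℝ] ℝ)) (hα : ∀ i, α i ≠ 0) {F : ι → SignType}
    {i : ι} (h : zeroSet F = {i}) : codim α F = 1 := by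
  have hset : {j | F j = 0} = ({i} : Set ι) := by
    ext j
    simp only [Set.mem_setOf_eq, Set.mem_singleton_iff]
    rw [← mem_zeroSet_iff F j, h, Finset.mem_singleton]
  rw [codim, hset]
  have hsimp : (⨅ j ∈ ({i} : Set ι), LinearMap.ker (α j)) = LinearMap.ker (α i) := by simp
  rw [hsimp]
  have := hyperplane_finrank (α i) (hα i)
  omega

lemma finrank_le_of_two_zeros (α : ι → (E →ₗ[ℝ] ℝ)) (hα : ∀ i, α i ≠ 0)
    (hker : ∀ i j, LinearMap.ker (α i) = LinearMap.ker (α j) → i = j)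
    {F : ι → SignType} {i j : ι} (hij : i ≠ j) (hFi : F i = 0) (hFj : F j = 0) :
    Module.finrank ℝ (⨅ k ∈ {k | F k = 0}, LinearMap.ker (α k) : Submodule ℝ E) + 2 ≤
      Module.finrank ℝ E := by
  have hMi : (⨅ k ∈ {k | F k = 0}, LinearMap.ker (α k) : Submodule ℝ E) ≤ LinearMap.ker (α i) :=
    biInf_le _ hFi
  have hMj : (⨅ k ∈ {k | F k = 0}, LinearMap.ker (α k) : Submodule ℝ E) ≤ LinearMap.ker (α j) :=
    biInf_le _ hFj
  have hne : LinearMap.ker (α i) ≠ LinearMap.ker (α j) := fun h => hij (hker i j h)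
  have hlt : LinearMap.ker (α i) ⊓ LinearMap.ker (α j) < LinearMap.ker (α i) := by
    apply lt_of_le_of_ne inf_le_left
    intro h
    exact hne (ker_eq_of_ker_le (hα i) (hα j) (inf_eq_left.1 h))
  have h1 : Module.finrank ℝ (⨅ k ∈ {k | F k = 0}, LinearMap.ker (α k) : Submodule ℝ E) ≤
      Module.finrank ℝ (LinearMap.ker (α i) ⊓ LinearMap.ker (α j) : Submodule ℝ E) :=
    Submodule.finrank_mono (le_inf hMi hMj)
  have h2 := Submodule.finrank_lt_finrank_of_lt hlt
  have h3 := hyperplane_finrank (α i) (hα i)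
  omega

lemma codim_ge_two_of_two_zeros (α : ι → (E →ₗ[ℝ] ℝ)) (hα : ∀ i, α i ≠ 0)
    (hker : ∀ i j, LinearMap.ker (α i) = LinearMap.ker (α j) → i = j)
    {F : ι → SignType} {i j : ι} (hij : i ≠ j) (hFi : F i = 0) (hFj : F j = 0) :
    2 ≤ codim α F := by
  have := finrank_le_of_two_zeros α hα hker hij hFi hFj
  rw [codim]
  omega

lemma codim_one_zeroSet (α : ι → (E →ₗ[ℝ] ℝ)) (hα : ∀ i, α i ≠ 0)
    (hker : ∀ i j, LinearMap.ker (α i) = LinearMap.ker (α j) → i = j)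
    {F : ι → SignType} (h : codim α F = 1) : ∃ i, zeroSet F = {i} := by
  rw [← Finset.card_eq_one]
  rcases Finset.eq_empty_or_nonempty (zeroSet F) with he | ⟨i, hi⟩
  · rw [codim_of_zeroSet_empty α he] at h; exact absurd h (by norm_num)
  · by_contra hcard
    have h2 : 2 ≤ (zeroSet F).card := by
      have hne : (zeroSet F).card ≠ 0 := fun hc =>
        absurd (Finset.card_eq_zero.1 hc ▸ hi) (Finset.notMem_empty i)
      omega
    obtain ⟨j, hj, k, hk, hjk⟩ := Finset.one_lt_card.1 h2
    have := codim_ge_two_of_two_zeros α hα hker hjk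
      ((mem_zeroSet_iff F j).1 hj) ((mem_zeroSet_iff F k).1 hk)
    omega

end ArrAux

namespace ArrAux

open Submodule Module PlaneAux

variable {E : Type*} [AddCommGroup E] [Module ℝ E] [FiniteDimensional ℝ E]
variable {ι : Type*} [Fintype ι]

lemma per_hyperplane (α : ι → (E →ₗ[ℝ] ℝ)) (hα : ∀ i, α i ≠ 0)
    (hker : ∀ i j, LinearMap.ker (α i) = LinearMap.ker (α j) → i = j)
    (hrank : arrRank α = 3) (i : ι) :
    Nat.card {G : Face α // zeroSet G.1 = {i}} =
      Nat.card {F : Face α // codim α F.1 = 2 ∧ F.1 i = 0} := by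
  classical
  set L : Submodule ℝ E := ⨅ j, LinearMap.ker (α j) with hL
  set W : Submodule ℝ E := LinearMap.ker (α i) with hW
  have hLW : L ≤ W := iInf_le _ i
  have hLle : ∀ j, L ≤ LinearMap.ker (α j) := fun j => iInf_le _ j
  have hE3 : Module.finrank ℝ E = Module.finrank ℝ L + 3 := by
    have h1 : Module.finrank ℝ L ≤ Module.finrank ℝ E := Submodule.finrank_le L
    have h2 := hrank
    rw [arrRank, ← hL] at h2
    omega
  have hWE : Module.finrank ℝ W + 1 = Module.finrank ℝ E := hyperplane_finrank (α i) (hα i)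
  set L' : Submodule ℝ W := L.comap W.subtype with hL'
  have hL'rank : Module.finrank ℝ L' = Module.finrank ℝ L :=
    (Submodule.comapSubtypeEquivOfLe hLW).finrank_eq
  obtain ⟨C', hC'⟩ := Submodule.exists_isCompl L'
  have hC'rank : Module.finrank ℝ C' = 2 := by
    have h := Submodule.finrank_add_eq_of_isCompl hC'
    omega
  set C : Submodule ℝ E := C'.map W.subtype with hC
  have hCrank : Module.finrank ℝ C = 2 := by
    rw [hC, ← (Submodule.equivMapOfInjective W.subtype (Submodule.injective_subtype W)
      C').finrank_eq]
    exact hC'rank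
  have hCW : C ≤ W := by rw [hC]; exact Submodule.map_subtype_le W C'
  have hLmap : L = L'.map W.subtype := by
    rw [hL', Submodule.map_comap_subtype, inf_eq_right.2 hLW]
  have hCL : C ⊓ L = ⊥ := by
    rw [hC, hLmap, ← Submodule.map_inf _ (Submodule.injective_subtype W),
      (hC'.symm.disjoint).eq_bot, Submodule.map_bot]
  have hCsup : C ⊔ L = W := by
    rw [hC, hLmap, ← Submodule.map_sup, (hC'.symm.codisjoint).eq_top, Submodule.map_top,
      Submodule.range_subtype]
  set b : Basis (Fin 2) ℝ C := Module.finBasisOfFinrankEq ℝ C hCrank with hb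
  set u : E := ((b 0 : C) : E) with hu
  set v : E := ((b 1 : C) : E) with hv
  have huC : u ∈ C := (b 0).2
  have hvC : v ∈ C := (b 1).2
  have hlin : ∀ p : ℝ × ℝ, p.1 • u + p.2 • v ∈ L → p = 0 := by
    intro p hp
    have hmem : p.1 • u + p.2 • v ∈ C := C.add_mem (C.smul_mem _ huC) (C.smul_mem _ hvC)
    have hbot : p.1 • u + p.2 • v ∈ C ⊓ L := ⟨hmem, hp⟩
    rw [hCL, Submodule.mem_bot] at hbot
    have hz : p.1 • (b 0) + p.2 • (b 1) = (0 : C) := by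
      apply Subtype.ext
      rw [Submodule.coe_add, SetLike.val_smul, SetLike.val_smul]
      rw [← hu, ← hv]
      simpa using hbot
    have hsum : ∑ t : Fin 2, (fun t : Fin 2 => if t = 0 then p.1 else p.2) t • b t = 0 := by
      rw [Fin.sum_univ_two]
      simpa using hz
    have hcoords := Fintype.linearIndependent_iff.1 b.linearIndependent _ hsum
    have h1 := hcoords 0
    have h2 := hcoords 1
    simp only [if_pos rfl] at h1
    norm_num at h2
    exact Prod.ext_iff.2 ⟨h1, h2⟩
  have hrepr : ∀ y ∈ C, ∃ p : ℝ × ℝ, y = p.1 • u + p.2 • v := by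
    intro y hy
    refine ⟨(b.repr ⟨y, hy⟩ 0, b.repr ⟨y, hy⟩ 1), ?_⟩
    have hs := b.sum_repr ⟨y, hy⟩
    rw [Fin.sum_univ_two] at hs
    have := congrArg (Subtype.val) hs
    rw [Submodule.coe_add, SetLike.val_smul, SetLike.val_smul] at this
    exact this.symm
  set c : ι → ℝ × ℝ := fun j => (α j u, α j v) with hc
  have hev : ∀ (j : ι) (p : ℝ × ℝ), PlaneAux.ev (c j) p = α j (p.1 • u + p.2 • v) := by
    intro j p
    rw [hc]
    simp only [PlaneAux.ev, map_add, _root_.map_smul, smul_eq_mul]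
    ring
  have hαu : α i u = 0 := hCW huC
  have hαv : α i v = 0 := hCW hvC
  have hci : c i = 0 := by
    rw [hc]; exact Prod.ext_iff.2 ⟨hαu, hαv⟩
  have hcj : ∀ j, j ≠ i → c j ≠ 0 := by
    intro j hj hzero
    have hu0 : α j u = 0 := congrArg Prod.fst hzero
    have hv0 : α j v = 0 := congrArg Prod.snd hzero
    have hWk : W ≤ LinearMap.ker (α j) := by
      intro w hw
      rw [← hCsup] at hw
      obtain ⟨y, hy, l, hl, hsum⟩ := Submodule.mem_sup.1 hw
      obtain ⟨p, rfl⟩ := hrepr y hy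
      rw [LinearMap.mem_ker, ← hsum, map_add, map_add, _root_.map_smul, _root_.map_smul,
        hu0, hv0, (show α j l = 0 from hLle j hl)]
      simp
    have hkk : LinearMap.ker (α i) = LinearMap.ker (α j) :=
      ker_eq_of_ker_le (hα i) (hα j) (by rw [← hW]; exact hWk)
    exact hj (hker i j hkk).symm
  have hcap : ∀ p : ℝ × ℝ, (∀ j, PlaneAux.ev (c j) p = 0) → p = 0 := by
    intro p hp
    apply hlin p
    rw [hL]
    rw [Submodule.mem_iInf]
    intro j
    rw [LinearMap.mem_ker, ← hev]
    exact hp j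
  have T1 : ∀ σ : ι → SignType, σ i = 0 →
      (IsFace α σ ↔ ∃ p : ℝ × ℝ, ∀ j, SignType.sign (PlaneAux.ev (c j) p) = σ j) := by
    intro σ hσi
    constructor
    · rintro ⟨x, hx⟩
      have hxW : x ∈ W := by
        rw [hW, LinearMap.mem_ker]
        have hxi := hx i
        rw [hσi] at hxi
        exact sign_eq_zero_iff.1 hxi
      rw [← hCsup] at hxW
      obtain ⟨y, hy, l, hl, hsum⟩ := Submodule.mem_sup.1 hxW
      obtain ⟨p, rfl⟩ := hrepr y hy
      refine ⟨p, fun j => ?_⟩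
      rw [hev]
      have heq : α j (p.1 • u + p.2 • v) = α j x := by
        have hstep : α j (p.1 • u + p.2 • v + l) = α j (p.1 • u + p.2 • v) + α j l :=
          map_add _ _ _
        rw [← hsum, hstep, (show α j l = 0 from hLle j hl), add_zero]
      rw [heq]
      exact hx j
    · rintro ⟨p, hp⟩
      exact ⟨p.1 • u + p.2 • v, fun j => by rw [← hev]; exact hp j⟩
  have T2b : ∀ (σ : ι → SignType) (p : ℝ × ℝ), p ≠ 0 →
      (∀ j, SignType.sign (PlaneAux.ev (c j) p) = σ j) → (∃ j, j ≠ i ∧ σ j = 0) → σ i = 0 →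
      codim α σ = 2 := by
    intro σ p hp0 hp hj hσi
    obtain ⟨j1, hj1i, hσj1⟩ := hj
    set x := p.1 • u + p.2 • v with hx
    have hzero : ∀ j, σ j = 0 → x ∈ LinearMap.ker (α j) := fun j hjz => by
      rw [LinearMap.mem_ker, ← hev]
      exact sign_eq_zero_iff.1 (by rw [hp j, hjz])
    have hxL : x ∉ L := fun h => hp0 (hlin p h)
    have hx0 : x ≠ 0 := fun h => hxL (h ▸ L.zero_mem)
    have hupper := finrank_le_of_two_zeros α hα hker (Ne.symm hj1i) hσi hσj1
    have hsub : L ⊔ (ℝ ∙ x) ≤ ⨅ k ∈ {k | σ k = 0}, LinearMap.ker (α k) := by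
      apply sup_le
      · exact le_iInf fun k => le_iInf fun hk => hLle k
      · rw [Submodule.span_singleton_le_iff_mem]
        rw [Submodule.mem_iInf]
        intro k
        rw [Submodule.mem_iInf]
        intro hk
        exact hzero k hk
    have hLx : L ⊓ (ℝ ∙ x) = ⊥ := by
      rw [eq_bot_iff]
      rintro y ⟨hyL, hyx⟩
      obtain ⟨t, rfl⟩ := Submodule.mem_span_singleton.1 hyx
      rcases eq_or_ne t 0 with rfl | ht
      · simp
      · exfalso
        apply hxL
        have hm := L.smul_mem t⁻¹ hyL
        rwa [smul_smul, inv_mul_cancel₀ ht, one_smul] at hm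
    have hrank_sup : Module.finrank ℝ (L ⊔ (ℝ ∙ x) : Submodule ℝ E)
        = Module.finrank ℝ L + 1 := by
      have hsf := Submodule.finrank_sup_add_finrank_inf_eq L (ℝ ∙ x)
      rw [hLx, finrank_bot, finrank_span_singleton hx0] at hsf
      omega
    have hlower : Module.finrank ℝ L + 1 ≤
        Module.finrank ℝ (⨅ k ∈ {k | σ k = 0}, LinearMap.ker (α k) : Submodule ℝ E) := by
      rw [← hrank_sup]
      exact Submodule.finrank_mono hsub
    rw [codim]
    omega
  have hAiff : ∀ σ : ι → SignType, (IsFace α σ ∧ zeroSet σ = {i}) ↔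
      ((∃ p : ℝ × ℝ, ∀ j, SignType.sign (PlaneAux.ev (c j) p) = σ j) ∧
        ∀ j, j ≠ i → σ j ≠ 0) := by
    intro σ
    constructor
    · rintro ⟨hface, hzs⟩
      have hσi : σ i = 0 := (mem_zeroSet_iff σ i).1 (hzs ▸ Finset.mem_singleton_self i)
      refine ⟨(T1 σ hσi).1 hface, fun j hj hc0 => hj ?_⟩
      have hmem : j ∈ zeroSet σ := (mem_zeroSet_iff σ j).2 hc0
      rw [hzs, Finset.mem_singleton] at hmem
      exact hmem
    · rintro ⟨⟨p, hp⟩, hne⟩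
      have hσi : σ i = 0 := by rw [← hp i, hci, PlaneAux.ev_zero_left, sign_zero]
      refine ⟨(T1 σ hσi).2 ⟨p, hp⟩, ?_⟩
      ext j
      rw [mem_zeroSet_iff, Finset.mem_singleton]
      constructor
      · intro h
        by_contra hji
        exact hne j hji h
      · rintro rfl
        exact hσi
  have hBiff : ∀ σ : ι → SignType, (IsFace α σ ∧ (codim α σ = 2 ∧ σ i = 0)) ↔
      (∃ p : ℝ × ℝ, p ≠ 0 ∧ (∀ j, SignType.sign (PlaneAux.ev (c j) p) = σ j) ∧
        ∃ j, j ≠ i ∧ σ j = 0) := by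
    intro σ
    constructor
    · rintro ⟨hface, hcd, hσi⟩
      obtain ⟨p, hp⟩ := (T1 σ hσi).1 hface
      have hp0 : p ≠ 0 := by
        rintro rfl
        have hall : ∀ j, σ j = 0 := fun j => by
          rw [← hp j, PlaneAux.ev_zero_right, sign_zero]
        have hset : {k | σ k = 0} = (Set.univ : Set ι) :=
          Set.eq_univ_of_forall fun j => hall j
        have hLuniv : (⨅ k ∈ (Set.univ : Set ι), LinearMap.ker (α k)) = L := by
          rw [hL]; simp
        have h3 : codim α σ = 3 := by
          rw [codim, hset, hLuniv]
          omega
        omega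
      have hj2 : ∃ j, j ≠ i ∧ σ j = 0 := by
        by_contra hno
        push_neg at hno
        have hzs : zeroSet σ = {i} := by
          ext j
          rw [mem_zeroSet_iff, Finset.mem_singleton]
          constructor
          · intro h
            by_contra hji
            exact hno j hji h
          · rintro rfl
            exact hσi
        have := codim_of_zeroSet_singleton α hα hzs
        omega
      exact ⟨p, hp0, hp, hj2⟩
    · rintro ⟨p, hp0, hp, hj⟩
      have hσi : σ i = 0 := by rw [← hp i, hci, PlaneAux.ev_zero_left, sign_zero]
      exact ⟨(T1 σ hσi).2 ⟨p, hp⟩, T2b σ p hp0 hp hj hσi, hσi⟩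
  have e1 : {G : Face α // zeroSet G.1 = {i}} ≃
      {σ : ι → SignType // IsFace α σ ∧ zeroSet σ = {i}} := by
    unfold Face
    exact Equiv.subtypeSubtypeEquivSubtypeInter (α := ι → SignType) (IsFace α)
      (fun σ => zeroSet σ = {i})
  have e2 : {F : Face α // codim α F.1 = 2 ∧ F.1 i = 0} ≃
      {σ : ι → SignType // IsFace α σ ∧ (codim α σ = 2 ∧ σ i = 0)} := by
    unfold Face
    exact Equiv.subtypeSubtypeEquivSubtypeInter (α := ι → SignType) (IsFace α)
      (fun σ => codim α σ = 2 ∧ σ i = 0)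
  calc Nat.card {G : Face α // zeroSet G.1 = {i}}
      = Nat.card {σ : ι → SignType // IsFace α σ ∧ zeroSet σ = {i}} :=
        Nat.card_congr e1
    _ = Nat.card {σ : ι → SignType // (∃ p : ℝ × ℝ, ∀ j,
          SignType.sign (PlaneAux.ev (c j) p) = σ j) ∧ ∀ j, j ≠ i → σ j ≠ 0} :=
        Nat.card_congr (Equiv.subtypeEquivRight hAiff)
    _ = Nat.card {σ : ι → SignType // ∃ p : ℝ × ℝ, p ≠ 0 ∧ (∀ j,
          SignType.sign (PlaneAux.ev (c j) p) = σ j) ∧ ∃ j, j ≠ i ∧ σ j = 0} :=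
        plane_card c i hci hcj hcap
    _ = Nat.card {σ : ι → SignType // IsFace α σ ∧ (codim α σ = 2 ∧ σ i = 0)} :=
        (Nat.card_congr (Equiv.subtypeEquivRight hBiff)).symm
    _ = Nat.card {F : Face α // codim α F.1 = 2 ∧ F.1 i = 0} :=
        (Nat.card_congr e2).symm

end ArrAux


/-- **Counting codimension-1 faces of a rank-3 arrangement.** Let `𝒜` be a central
hyperplane arrangement of rank `3`.  Then the number of faces of codimension `1` equals
`Σ_{k=2}^{N} k · n_k`, where `n_k` is the number of faces `F` with `codim F = 2` and
`#𝒜_F = k`. -/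
theorem codim_one_face_count {ι : Type*} [Fintype ι] [FiniteDimensional ℝ E]
    (α : ι → (E →ₗ[ℝ] ℝ)) (hα : ∀ i, α i ≠ 0)
    (hker : ∀ i j, LinearMap.ker (α i) = LinearMap.ker (α j) → i = j)
    (hrank : arrRank α = 3) :
    Nat.card {G : Face α // codim α G.1 = 1} =
      ∑ k ∈ Finset.Icc 2 (Fintype.card ι),
        k * Nat.card {F : Face α // codim α F.1 = 2 ∧ (zeroSet F.1).card = k} := by
  classical
  have hNempty : Nonempty ι := by
    by_contra h
    rw [not_nonempty_iff] at h
    rw [arrRank, iInf_of_empty, finrank_top, Nat.sub_self] at hrank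
    exact absurd hrank (by norm_num)
  have hcard : ∀ (P : Face α → Prop) [DecidablePred P], Nat.card {G : Face α // P G}
      = (Finset.univ.filter P).card := by
    intro P inst
    rw [Nat.card_eq_fintype_card, Fintype.card_subtype]
  set g : Face α → ι := fun G =>
    if h : ∃ i, zeroSet G.1 = {i} then h.choose else Classical.arbitrary ι with hg
  have hgspec : ∀ G : Face α, codim α G.1 = 1 → zeroSet G.1 = {g G} := by
    intro G hG
    have h := ArrAux.codim_one_zeroSet α hα hker hG
    rw [hg]
    dsimp only
    rw [dif_pos h]
    exact h.choose_spec
  have hLHS : (Finset.univ.filter fun G : Face α => codim α G.1 = 1).card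
      = ∑ i : ι, (Finset.univ.filter fun G : Face α => zeroSet G.1 = {i}).card := by
    rw [Finset.card_eq_sum_card_fiberwise
      (fun (G : Face α) (_ : G ∈ Finset.univ.filter fun G : Face α => codim α G.1 = 1) =>
        Finset.mem_univ (g G))]
    apply Finset.sum_congr rfl
    intro i _
    congr 1
    rw [Finset.filter_filter]
    apply Finset.filter_congr
    intro G _
    constructor
    · rintro ⟨h1, h2⟩
      rw [← h2]
      exact hgspec G h1
    · intro h
      have hc1 : codim α G.1 = 1 := ArrAux.codim_of_zeroSet_singleton α hα h
      refine ⟨hc1, ?_⟩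
      have hgG := hgspec G hc1
      rw [h] at hgG
      exact (Finset.singleton_injective hgG).symm
  have hcard2 : ∀ F : Face α, codim α F.1 = 2 →
      2 ≤ (zeroSet F.1).card ∧ (zeroSet F.1).card ≤ Fintype.card ι := by
    intro F h2
    constructor
    · by_contra hlt
      push_neg at hlt
      have hcases : (zeroSet F.1).card = 0 ∨ (zeroSet F.1).card = 1 := by omega
      rcases hcases with h | h
      · rw [ArrAux.codim_of_zeroSet_empty α (Finset.card_eq_zero.1 h)] at h2
        norm_num at h2
      · obtain ⟨i, hi⟩ := Finset.card_eq_one.1 h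
        rw [ArrAux.codim_of_zeroSet_singleton α hα hi] at h2
        norm_num at h2
    · exact le_of_le_of_eq (Finset.card_le_univ _) Finset.card_univ
  set s2 : Finset (Face α) := Finset.univ.filter (fun F : Face α => codim α F.1 = 2) with hs2
  have hswap : ∑ F ∈ s2, (zeroSet F.1).card
      = ∑ i : ι, (Finset.univ.filter fun F : Face α => codim α F.1 = 2 ∧ F.1 i = 0).card := by
    have hzs : ∀ F : Face α, (zeroSet F.1).card = ∑ i : ι, if F.1 i = 0 then 1 else 0 := by
      intro F
      rw [zeroSet, Finset.card_filter]
    rw [Finset.sum_congr rfl (fun F _ => hzs F), Finset.sum_comm]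
    apply Finset.sum_congr rfl
    intro i _
    rw [← Finset.filter_filter, ← hs2, Finset.card_filter]
  have hk : ∀ k, k * Nat.card {F : Face α // codim α F.1 = 2 ∧ (zeroSet F.1).card = k}
      = ∑ F ∈ s2.filter (fun F => (zeroSet F.1).card = k), (zeroSet F.1).card := by
    intro k
    rw [hcard]
    rw [Finset.sum_congr rfl (fun F hF => (Finset.mem_filter.1 hF).2)]
    rw [Finset.sum_const, smul_eq_mul, mul_comm]
    congr 1
    rw [hs2, Finset.filter_filter]
  have hfiber : ∑ k ∈ Finset.Icc 2 (Fintype.card ι),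
      ∑ F ∈ s2.filter (fun F => (zeroSet F.1).card = k), (zeroSet F.1).card
      = ∑ F ∈ s2, (zeroSet F.1).card := by
    apply Finset.sum_fiberwise_of_maps_to
    intro F hF
    rw [Finset.mem_Icc]
    exact hcard2 F ((Finset.mem_filter.1 hF).2)
  calc Nat.card {G : Face α // codim α G.1 = 1}
      = (Finset.univ.filter fun G : Face α => codim α G.1 = 1).card := hcard _
    _ = ∑ i : ι, (Finset.univ.filter fun G : Face α => zeroSet G.1 = {i}).card := hLHS
    _ = ∑ i : ι, Nat.card {G : Face α // zeroSet G.1 = {i}} :=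
        Finset.sum_congr rfl (fun i _ => (hcard _).symm)
    _ = ∑ i : ι, Nat.card {F : Face α // codim α F.1 = 2 ∧ F.1 i = 0} :=
        Finset.sum_congr rfl (fun i _ => ArrAux.per_hyperplane α hα hker hrank i)
    _ = ∑ i : ι, (Finset.univ.filter fun F : Face α => codim α F.1 = 2 ∧ F.1 i = 0).card :=
        Finset.sum_congr rfl (fun i _ => hcard _)
    _ = ∑ F ∈ s2, (zeroSet F.1).card := hswap.symm
    _ = ∑ k ∈ Finset.Icc 2 (Fintype.card ι),
          ∑ F ∈ s2.filter (fun F => (zeroSet F.1).card = k), (zeroSet F.1).card := hfiber.symm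
    _ = ∑ k ∈ Finset.Icc 2 (Fintype.card ι),
          k * Nat.card {F : Face α // codim α F.1 = 2 ∧ (zeroSet F.1).card = k} :=
        Finset.sum_congr rfl (fun k _ => (hk k).symm)

end
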